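/- There exists a constant c > 0, depending only on c₀, c₁, α and β, such that for every ξ ∈ M for which the cell problem has a solution v_ξ ∈ S one has f*(A^eff(ξ)) ≤ c f(ξ) + c. -/

import Mathlib

/-!
The flux `a = A(·, ξ + v_ξ)` is itself a competitor for `f*(A^eff ξ)`: the cell equation says
exactly that it is orthogonal to `S`, and its mean is `A^eff ξ`. Hence, by the growth bound,
`f*(A^eff ξ) ≤ ∫ |a|^{p'}/p' ≤ c₁ ∫ |ξ + v_ξ|^p + c₁`. The energy `∫ |ξ + v_ξ|^p` is controlled by
`f ξ`: the cell equation gives `∫ a·(ξ + v_ξ) = ∫ a·(ξ + w)` for every `w ∈ S`; the left side is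
bounded below by coercivity, the right side above by Young's inequality with a weight `δ` so small
that `δ c₁ ∫ |ξ + v_ξ|^p` can be absorbed, and taking the infimum over `w` concludes.
-/

open MeasureTheory ENNReal
open scoped RealInnerProductSpace

/-- `Md d`: the space of symmetric `d × d` real matrices, identified (as in the paper)
with the Euclidean space `ℝ^{d(d+1)/2}`. -/
abbrev Md (d : ℕ) : Type := EuclideanSpace ℝ (Fin (d * (d + 1) / 2))

namespace Real

theorem rpow_le_rpow_add_one {x p q : ℝ} (hx : 0 ≤ x) (hp : 0 ≤ p) (hpq : p ≤ q) :
    x ^ p ≤ x ^ q + 1 := by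
  rcases le_total x 1 with h | h
  · linarith [rpow_le_one hx h hp, rpow_nonneg hx q]
  · linarith [rpow_le_rpow_of_exponent_le h hpq]

theorem rpow_add_le_mul_rpow_add_rpow {a b p : ℝ} (ha : 0 ≤ a) (hb : 0 ≤ b) (hp : 1 ≤ p) :
    (a + b) ^ p ≤ 2 ^ (p - 1) * (a ^ p + b ^ p) := by
  lift a to NNReal using ha
  lift b to NNReal using hb
  exact_mod_cast NNReal.rpow_add_le_mul_rpow_add_rpow a b hp

theorem young_inequality_weighted_of_nonneg {a b p δ : ℝ} (ha : 0 ≤ a) (hb : 0 ≤ b)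
    (hp : 1 < p) (hδ : 0 < δ) :
    a * b ≤ δ * (a ^ (p / (p - 1)) / (p / (p - 1))) + δ ^ (1 - p) * (b ^ p / p) := by
  set t := δ ^ ((p - 1) / p)
  have ht : 0 < t := rpow_pos_of_pos hδ _
  have hta : (t * a) ^ (p / (p - 1)) = δ * a ^ (p / (p - 1)) := by
    have e : (p - 1) / p * (p / (p - 1)) = 1 := by field_simp [(sub_pos.2 hp).ne']
    rw [mul_rpow ht.le ha, ← rpow_mul hδ.le, e, rpow_one]
  have htb : (b / t) ^ p = δ ^ (1 - p) * b ^ p := by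
    rw [div_rpow hb ht.le, ← rpow_mul hδ.le, div_mul_cancel₀ _ (by linarith : p ≠ 0),
      div_eq_mul_inv, mul_comm, ← rpow_neg hδ.le, neg_sub]
  have h : (t * a) * (b / t) ≤ (t * a) ^ (p / (p - 1)) / (p / (p - 1)) + (b / t) ^ p / p :=
    young_inequality_of_nonneg (mul_nonneg ht.le ha) (div_nonneg hb ht.le)
      (HolderConjugate.conjExponent hp).symm
  have hab : t * a * (b / t) = a * b := by field_simp
  rwa [hab, hta, htb, mul_div_assoc, mul_div_assoc] at h

end Real

theorem exists_pos_le_one_mul_le {a b : ℝ} (ha : 0 < a) (hb : 0 < b) :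
    ∃ δ : ℝ, 0 < δ ∧ δ ≤ 1 ∧ δ * b ≤ a :=
  ⟨min 1 (a / b), lt_min one_pos (div_pos ha hb), min_le_left _ _,
    (mul_le_mul_of_nonneg_right (min_le_right _ _) hb.le).trans (div_mul_cancel₀ a hb.ne').le⟩

section VariableExponent

variable {Ω E : Type*} [MeasurableSpace Ω] {P : Measure Ω} {p : Ω → ℝ} {β c₁ : ℝ}
  [NormedAddCommGroup E] [MeasurableSpace E] [BorelSpace E]

theorem integrable_const_rpow [IsFiniteMeasure P] (hpm : Measurable p)
    (hp : ∀ ω, 0 ≤ p ω) (hpβ : ∀ ω, p ω ≤ β) {x : ℝ} (hx : 0 ≤ x) :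
    Integrable (fun ω => x ^ p ω) P :=
  .of_bound (measurable_const.pow hpm).aestronglyMeasurable (x ^ β + 1) <| ae_of_all _ fun ω => by
    rw [Real.norm_of_nonneg (Real.rpow_nonneg hx _)]
    exact Real.rpow_le_rpow_add_one hx (hp ω) (hpβ ω)

theorem integrable_norm_rpow_conj_of_growth [IsFiniteMeasure P] (hpm : Measurable p)
    {a η : Ω → E} (ha : Measurable a)
    (hgrowth : ∀ ω, ‖a ω‖ ^ (p ω / (p ω - 1)) ≤ c₁ * ‖η ω‖ ^ p ω + c₁)
    (hη : Integrable (fun ω => ‖η ω‖ ^ p ω) P) :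
    Integrable (fun ω => ‖a ω‖ ^ (p ω / (p ω - 1))) P :=
  ((hη.const_mul c₁).add (integrable_const c₁)).mono'
    (ha.norm.pow (hpm.div (hpm.sub measurable_const))).aestronglyMeasurable <|
    ae_of_all _ fun ω => by
      rw [Real.norm_of_nonneg (Real.rpow_nonneg (norm_nonneg _) _)]
      exact hgrowth ω

variable [SecondCountableTopology E]

theorem MeasureTheory.Integrable.norm_add_rpow {u w : Ω → E} (hpm : Measurable p)
    (hp : ∀ ω, 1 ≤ p ω) (hpβ : ∀ ω, p ω ≤ β) (hu : Measurable u) (hw : Measurable w)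
    (hu' : Integrable (fun ω => ‖u ω‖ ^ p ω) P) (hw' : Integrable (fun ω => ‖w ω‖ ^ p ω) P) :
    Integrable (fun ω => ‖u ω + w ω‖ ^ p ω) P := by
  refine ((hu'.add hw').const_mul (2 ^ β)).mono' ((hu.add hw).norm.pow hpm).aestronglyMeasurable
    (ae_of_all _ fun ω => ?_)
  rw [Real.norm_of_nonneg (Real.rpow_nonneg (norm_nonneg _) _)]
  calc ‖u ω + w ω‖ ^ p ω ≤ (‖u ω‖ + ‖w ω‖) ^ p ω :=
        Real.rpow_le_rpow (norm_nonneg _) (norm_add_le _ _) (zero_le_one.trans (hp ω))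
    _ ≤ 2 ^ (p ω - 1) * (‖u ω‖ ^ p ω + ‖w ω‖ ^ p ω) :=
        Real.rpow_add_le_mul_rpow_add_rpow (norm_nonneg _) (norm_nonneg _) (hp ω)
    _ ≤ 2 ^ β * (‖u ω‖ ^ p ω + ‖w ω‖ ^ p ω) := by
        gcongr
        · norm_num
        · linarith [hpβ ω]

theorem integrable_norm_const_add_rpow [IsFiniteMeasure P] (hpm : Measurable p)
    (hp : ∀ ω, 1 ≤ p ω) (hpβ : ∀ ω, p ω ≤ β) (ξ : E) {w : Ω → E} (hw : Measurable w)
    (hw' : Integrable (fun ω => ‖w ω‖ ^ p ω) P) :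
    Integrable (fun ω => ‖ξ + w ω‖ ^ p ω) P :=
  Integrable.norm_add_rpow (u := fun _ => ξ) hpm hp hpβ measurable_const hw
    (integrable_const_rpow hpm (fun ω => zero_le_one.trans (hp ω)) hpβ (norm_nonneg ξ)) hw'

variable [InnerProductSpace ℝ E]

theorem MeasureTheory.Integrable.inner_of_norm_rpow {a w : Ω → E} (hp : ∀ ω, 1 < p ω)
    (ha : Measurable a) (hw : Measurable w)
    (ha' : Integrable (fun ω => ‖a ω‖ ^ (p ω / (p ω - 1))) P)
    (hw' : Integrable (fun ω => ‖w ω‖ ^ p ω) P) :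
    Integrable (fun ω => ⟪a ω, w ω⟫) P := by
  refine (ha'.add hw').mono' (ha.inner hw).aestronglyMeasurable (ae_of_all _ fun ω => ?_)
  have hq := (Real.HolderConjugate.conjExponent (hp ω)).symm
  calc ‖⟪a ω, w ω⟫‖ ≤ ‖a ω‖ * ‖w ω‖ := norm_inner_le_norm _ _
    _ ≤ ‖a ω‖ ^ (p ω / (p ω - 1)) / (p ω / (p ω - 1)) + ‖w ω‖ ^ p ω / p ω :=
        Real.young_inequality_of_nonneg (norm_nonneg _) (norm_nonneg _) hq
    _ ≤ ‖a ω‖ ^ (p ω / (p ω - 1)) + ‖w ω‖ ^ p ω := by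
        gcongr
        · exact div_le_self (Real.rpow_nonneg (norm_nonneg _) _) hq.lt.le
        · exact div_le_self (Real.rpow_nonneg (norm_nonneg _) _) (hp ω).le

end VariableExponent

section CellProblem

variable {Ω E : Type*} [MeasurableSpace Ω] {P : Measure Ω} [IsProbabilityMeasure P]
  {p : Ω → ℝ} {β c₀ c₁ δ : ℝ} [NormedAddCommGroup E]

theorem lintegral_ofReal_norm_rpow_conj_le_of_growth {a η : Ω → E} (hp : ∀ ω, 1 < p ω)
    (hgrowth : ∀ ω, ‖a ω‖ ^ (p ω / (p ω - 1)) ≤ c₁ * ‖η ω‖ ^ p ω + c₁)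
    (hη : Integrable (fun ω => ‖η ω‖ ^ p ω) P) :
    ∫⁻ ω, ENNReal.ofReal (‖a ω‖ ^ (p ω / (p ω - 1)) / (p ω / (p ω - 1))) ∂P ≤
      ENNReal.ofReal (c₁ * ∫ ω, ‖η ω‖ ^ p ω ∂P + c₁) := by
  have hbound : Integrable (fun ω => c₁ * ‖η ω‖ ^ p ω + c₁) P :=
    (hη.const_mul c₁).add (integrable_const c₁)
  calc ∫⁻ ω, ENNReal.ofReal (‖a ω‖ ^ (p ω / (p ω - 1)) / (p ω / (p ω - 1))) ∂P
      ≤ ∫⁻ ω, ENNReal.ofReal (c₁ * ‖η ω‖ ^ p ω + c₁) ∂P :=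
        lintegral_mono fun ω => ENNReal.ofReal_le_ofReal <|
          (div_le_self (Real.rpow_nonneg (norm_nonneg _) _)
            (Real.HolderConjugate.conjExponent (hp ω)).symm.lt.le).trans (hgrowth ω)
    _ = ENNReal.ofReal (∫ ω, (c₁ * ‖η ω‖ ^ p ω + c₁) ∂P) :=
        (ofReal_integral_eq_lintegral_ofReal hbound <| ae_of_all _ fun ω =>
          (Real.rpow_nonneg (norm_nonneg _) _).trans (hgrowth ω)).symm
    _ = ENNReal.ofReal (c₁ * ∫ ω, ‖η ω‖ ^ p ω ∂P + c₁) := by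
        rw [integral_add (hη.const_mul c₁) (integrable_const c₁), integral_const_mul,
          integral_const, probReal_univ, one_smul]

variable [InnerProductSpace ℝ E]

theorem integral_norm_rpow_le_of_coercive {a η ζ : Ω → E} (hp : ∀ ω, 1 < p ω)
    (hpβ : ∀ ω, p ω ≤ β) (hδ : 0 < δ) (hδ₁ : δ ≤ 1) (hδc : δ * c₁ ≤ c₀ / 2)
    (hcoerc : ∀ ω, c₀ * ‖η ω‖ ^ p ω - c₀⁻¹ ≤ ⟪a ω, η ω⟫)
    (hgrowth : ∀ ω, ‖a ω‖ ^ (p ω / (p ω - 1)) ≤ c₁ * ‖η ω‖ ^ p ω + c₁)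
    (hη : Integrable (fun ω => ‖η ω‖ ^ p ω) P) (hζ : Integrable (fun ω => ‖ζ ω‖ ^ p ω / p ω) P)
    (haη : Integrable (fun ω => ⟪a ω, η ω⟫) P) (haζ : Integrable (fun ω => ⟪a ω, ζ ω⟫) P)
    (horth : ∫ ω, ⟪a ω, η ω⟫ ∂P = ∫ ω, ⟪a ω, ζ ω⟫ ∂P) :
    c₀ / 2 * ∫ ω, ‖η ω‖ ^ p ω ∂P ≤
      δ ^ (1 - β) * ∫ ω, ‖ζ ω‖ ^ p ω / p ω ∂P + c₀⁻¹ + c₀ / 2 := by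
  have hpt : ∀ ω, ⟪a ω, ζ ω⟫ ≤
      δ * (c₁ * ‖η ω‖ ^ p ω + c₁) + δ ^ (1 - β) * (‖ζ ω‖ ^ p ω / p ω) := by
    intro ω
    have hq := (Real.HolderConjugate.conjExponent (hp ω)).symm
    calc ⟪a ω, ζ ω⟫ ≤ ‖a ω‖ * ‖ζ ω‖ := real_inner_le_norm _ _
      _ ≤ δ * (‖a ω‖ ^ (p ω / (p ω - 1)) / (p ω / (p ω - 1))) +
          δ ^ (1 - p ω) * (‖ζ ω‖ ^ p ω / p ω) :=
        Real.young_inequality_weighted_of_nonneg (norm_nonneg _) (norm_nonneg _) (hp ω) hδ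
      _ ≤ _ := by
        gcongr ?_ + ?_
        · exact mul_le_mul_of_nonneg_left ((div_le_self (Real.rpow_nonneg (norm_nonneg _) _)
            hq.lt.le).trans (hgrowth ω)) hδ.le
        · exact mul_le_mul_of_nonneg_right
            (Real.rpow_le_rpow_of_exponent_ge hδ hδ₁ (by linarith [hpβ ω]))
            (div_nonneg (Real.rpow_nonneg (norm_nonneg _) _) (by linarith [hp ω]))
  have hbound : Integrable (fun ω => c₁ * ‖η ω‖ ^ p ω + c₁) P :=
    (hη.const_mul c₁).add (integrable_const c₁)
  have hlower : ∫ ω, (c₀ * ‖η ω‖ ^ p ω - c₀⁻¹) ∂P ≤ ∫ ω, ⟪a ω, η ω⟫ ∂P :=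
    integral_mono ((hη.const_mul c₀).sub (integrable_const c₀⁻¹)) haη hcoerc
  have hupper : ∫ ω, ⟪a ω, ζ ω⟫ ∂P ≤
      ∫ ω, (δ * (c₁ * ‖η ω‖ ^ p ω + c₁) + δ ^ (1 - β) * (‖ζ ω‖ ^ p ω / p ω)) ∂P :=
    integral_mono haζ ((hbound.const_mul δ).add (hζ.const_mul _)) hpt
  rw [integral_sub (hη.const_mul c₀) (integrable_const _), integral_const_mul] at hlower
  rw [integral_add (hbound.const_mul δ) (hζ.const_mul _), integral_const_mul, integral_const_mul,
    integral_add (hη.const_mul c₁) (integrable_const c₁), integral_const_mul] at hupper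
  simp only [integral_const, probReal_univ, one_smul] at hlower hupper
  have hG : 0 ≤ ∫ ω, ‖η ω‖ ^ p ω ∂P := integral_nonneg fun ω => Real.rpow_nonneg (norm_nonneg _) _
  nlinarith

variable [MeasurableSpace E] [BorelSpace E] [SecondCountableTopology E]

theorem integral_norm_rpow_le_of_cell_problem (S : Submodule ℝ (Ω → E))
    (hSm : ∀ w ∈ S, Measurable w) (hSint : ∀ w ∈ S, Integrable (fun ω => ‖w ω‖ ^ p ω) P)
    (hpm : Measurable p) (hp : ∀ ω, 1 < p ω) (hpβ : ∀ ω, p ω ≤ β) (hc₀ : 0 < c₀)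
    (hδ : 0 < δ) (hδ₁ : δ ≤ 1) (hδc : δ * c₁ ≤ c₀ / 2)
    {ξ : E} {v a : Ω → E} (hv : v ∈ S) (ha : Measurable a)
    (hcell : ∀ θ ∈ S, ∫ ω, ⟪a ω, θ ω⟫ ∂P = 0)
    (hcoerc : ∀ ω, c₀ * ‖ξ + v ω‖ ^ p ω - c₀⁻¹ ≤ ⟪a ω, ξ + v ω⟫)
    (hgrowth : ∀ ω, ‖a ω‖ ^ (p ω / (p ω - 1)) ≤ c₁ * ‖ξ + v ω‖ ^ p ω + c₁) :
    ∫ ω, ‖ξ + v ω‖ ^ p ω ∂P ≤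
      2 / c₀ * δ ^ (1 - β) * (⨅ w : S, ∫ ω, ‖ξ + (w : Ω → E) ω‖ ^ p ω / p ω ∂P) +
        2 / c₀ ^ 2 + 1 := by
  have hint : ∀ w ∈ S, Integrable (fun ω => ‖ξ + w ω‖ ^ p ω) P := fun w hw =>
    integrable_norm_const_add_rpow hpm (fun ω => (hp ω).le) hpβ ξ (hSm w hw) (hSint w hw)
  have hint' : ∀ w ∈ S, Integrable (fun ω => ‖ξ + w ω‖ ^ p ω / p ω) P := fun w hw =>
    (hint w hw).mono'
      (((measurable_const.add (hSm w hw)).norm.pow hpm).div hpm).aestronglyMeasurable <|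
      ae_of_all _ fun ω => by
        have hpos : 0 ≤ ‖ξ + w ω‖ ^ p ω := Real.rpow_nonneg (norm_nonneg _) _
        rw [Real.norm_of_nonneg (div_nonneg hpos (by linarith [hp ω]))]
        exact div_le_self hpos (hp ω).le
  have ha' := integrable_norm_rpow_conj_of_growth hpm ha hgrowth (hint v hv)
  have hinner : ∀ w ∈ S, Integrable (fun ω => ⟪a ω, ξ + w ω⟫) P := fun w hw =>
    ha'.inner_of_norm_rpow hp ha (measurable_const.add (hSm w hw)) (hint w hw)
  have horth : ∀ w ∈ S, ∫ ω, ⟪a ω, ξ + v ω⟫ ∂P = ∫ ω, ⟪a ω, ξ + w ω⟫ ∂P := by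
    intro w hw
    have hwv := S.sub_mem hw hv
    have hsplit : (fun ω => ⟪a ω, ξ + w ω⟫) = fun ω => ⟪a ω, ξ + v ω⟫ + ⟪a ω, (w - v) ω⟫ := by
      ext ω
      rw [← inner_add_right, Pi.sub_apply, add_add_sub_cancel]
    rw [hsplit, integral_add (hinner v hv)
      (ha'.inner_of_norm_rpow hp ha (hSm _ hwv) (hSint _ hwv)), hcell _ hwv, add_zero]
  have hδβ : 0 < δ ^ (1 - β) := Real.rpow_pos_of_pos hδ _
  have : Nonempty S := ⟨0⟩
  have hinf : (c₀ / 2 * ∫ ω, ‖ξ + v ω‖ ^ p ω ∂P - c₀⁻¹ - c₀ / 2) / δ ^ (1 - β) ≤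
      ⨅ w : S, ∫ ω, ‖ξ + (w : Ω → E) ω‖ ^ p ω / p ω ∂P := by
    refine le_ciInf fun w => ?_
    rw [div_le_iff₀' hδβ]
    linarith [integral_norm_rpow_le_of_coercive hp hpβ hδ hδ₁ hδc hcoerc hgrowth (hint v hv)
      (hint' w w.2) (hinner v hv) (hinner w w.2) (horth w w.2)]
  rw [div_le_iff₀' hδβ] at hinf
  calc ∫ ω, ‖ξ + v ω‖ ^ p ω ∂P = 2 / c₀ * (c₀ / 2 * ∫ ω, ‖ξ + v ω‖ ^ p ω ∂P) := by field_simp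
    _ ≤ 2 / c₀ * (δ ^ (1 - β) * (⨅ w : S, ∫ ω, ‖ξ + (w : Ω → E) ω‖ ^ p ω / p ω ∂P) +
          c₀⁻¹ + c₀ / 2) := by gcongr; linarith
    _ = _ := by field_simp

end CellProblem

theorem stmt12_general
    {d : ℕ}
    (c₀ c₁ α β : ℝ) (hc₀ : 0 < c₀) (hc₁ : 0 < c₁) (hα : 1 < α) :
    ∃ c : ℝ, 0 < c ∧
      ∀ (Ω : Type) [MeasurableSpace Ω] (P : Measure Ω) [IsProbabilityMeasure P]
        (p : Ω → ℝ), Measurable p → (∀ ω, α ≤ p ω) → (∀ ω, p ω ≤ β) →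
      ∀ A : Ω → Md d → Md d, (∀ ξ : Md d, Measurable (fun ω => A ω ξ)) →
        (∀ ω, Continuous (A ω)) →
        (∀ ω (ξ : Md d), c₀ * ‖ξ‖ ^ p ω - c₀⁻¹ ≤ ⟪A ω ξ, ξ⟫) →
        (∀ ω (ξ : Md d), ‖A ω ξ‖ ^ (p ω / (p ω - 1)) ≤ c₁ * ‖ξ‖ ^ p ω + c₁) →
      -- `S` is a linear subspace of the measurable functions `Ω → M` with finite
      -- `p(⬝)`-integral and zero mean:
      ∀ S : Set (Ω → Md d), (∀ w ∈ S, Measurable w) →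
        (∀ w ∈ S, ∫⁻ ω, ENNReal.ofReal (‖w ω‖ ^ p ω) ∂P < ⊤) →
        ((0 : Ω → Md d) ∈ S) →
        (∀ w₁ ∈ S, ∀ w₂ ∈ S, w₁ + w₂ ∈ S) →
        (∀ (r : ℝ), ∀ w ∈ S, r • w ∈ S) →
        (∀ w ∈ S, ∫ ω, w ω ∂P = 0) →
      ∀ f : Md d → ℝ,
        (∀ ζ : Md d, f ζ = ⨅ w : S, ∫ ω, ‖ζ + (w : Ω → Md d) ω‖ ^ p ω / p ω ∂P) →
      ∀ fs : Md d → ℝ≥0∞,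
        (∀ ζ : Md d, fs ζ = ⨅ (w : Ω → Md d) (_ : Measurable w)
          (_ : ∫⁻ ω, ENNReal.ofReal (‖w ω‖ ^ (p ω / (p ω - 1))) ∂P < ⊤)
          (_ : ∀ v ∈ S, ∫ ω, ⟪w ω, v ω⟫ ∂P = 0)
          (_ : ∫ ω, w ω ∂P = ζ),
          ∫⁻ ω, ENNReal.ofReal (‖w ω‖ ^ (p ω / (p ω - 1)) / (p ω / (p ω - 1))) ∂P) →
      ∀ (ξ : Md d) (vξ : Ω → Md d), vξ ∈ S →
        (∀ θ ∈ S, ∫ ω, ⟪A ω (ξ + vξ ω), θ ω⟫ ∂P = 0) →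
        fs (∫ ω, A ω (ξ + vξ ω) ∂P) ≤ ENNReal.ofReal (c * f ξ + c) := by
  obtain ⟨δ, hδ, hδ₁, hδc⟩ := exists_pos_le_one_mul_le (half_pos hc₀) hc₁
  refine ⟨c₁ * (2 / c₀ * δ ^ (1 - β) + 2 / c₀ ^ 2 + 2), by positivity, ?_⟩
  intro Ω _ P _ p hpm hpα hpβ A hAm hAc hcoerc hgrowth S hSm hSfin hS0 hSadd hSsmul _
    f hf fs hfs ξ v hv hcell
  let S' : Submodule ℝ (Ω → Md d) :=
    { carrier := S, add_mem' := fun h₁ h₂ => hSadd _ h₁ _ h₂, zero_mem' := hS0,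
      smul_mem' := hSsmul }
  have hp : ∀ ω, 1 < p ω := fun ω => hα.trans_le (hpα ω)
  have hSint : ∀ w ∈ S, Integrable (fun ω => ‖w ω‖ ^ p ω) P := fun w hw =>
    (lintegral_ofReal_ne_top_iff_integrable ((hSm w hw).norm.pow hpm).aestronglyMeasurable
      (ae_of_all _ fun ω => Real.rpow_nonneg (norm_nonneg _) _)).1 (hSfin w hw).ne
  have ha : Measurable fun ω => A ω (ξ + v ω) :=
    (measurable_uncurry_of_continuous_of_measurable hAc hAm).comp
      ((measurable_const.add (hSm v hv)).prodMk measurable_id)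
  have hη := integrable_norm_const_add_rpow hpm (fun ω => (hp ω).le) hpβ ξ (hSm v hv) (hSint v hv)
  have henergy : ∫ ω, ‖ξ + v ω‖ ^ p ω ∂P ≤ 2 / c₀ * δ ^ (1 - β) * f ξ + 2 / c₀ ^ 2 + 1 :=
    hf ξ ▸ integral_norm_rpow_le_of_cell_problem S' hSm hSint hpm hp hpβ hc₀ hδ hδ₁ hδc hv ha
      hcell (fun ω => hcoerc ω _) (fun ω => hgrowth ω _)
  have hf0 : 0 ≤ f ξ := hf ξ ▸ Real.iInf_nonneg fun w => integral_nonneg fun ω =>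
    div_nonneg (Real.rpow_nonneg (norm_nonneg _) _) (zero_le_one.trans (hp ω).le)
  rw [hfs]
  refine iInf_le_of_le _ <| iInf_le_of_le ha <| iInf_le_of_le ?_ <| iInf_le_of_le hcell <|
    iInf_le_of_le rfl <| (lintegral_ofReal_norm_rpow_conj_le_of_growth hp
      (fun ω => hgrowth ω _) hη).trans (ENNReal.ofReal_le_ofReal ?_)
  · exact (integrable_norm_rpow_conj_of_growth hpm ha (fun ω => hgrowth ω _) hη).lintegral_lt_top
  · nlinarith [mul_le_mul_of_nonneg_left henergy hc₁.le,
      mul_nonneg (by positivity : 0 ≤ c₁ * (2 / c₀ ^ 2 + 2)) hf0,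
      (by positivity : 0 ≤ c₁ * (2 / c₀ * δ ^ (1 - β)))]

/-- second inequality in Lemma `l_eff-tenz`: there is a constant
`c > 0` depending only on `c₀, c₁, α, β` such that `f*(A^eff(ξ)) ≤ c f(ξ) + c`
whenever the cell problem for `ξ` is solvable. -/
theorem stmt12
    {d : ℕ} (hd : 1 ≤ d)
    (c₀ c₁ α β : ℝ) (hc₀ : 0 < c₀) (hc₁ : 0 < c₁) (hα : 1 < α) (hαβ : α ≤ β) :
    ∃ c : ℝ, 0 < c ∧
      ∀ (Ω : Type) [MeasurableSpace Ω] (P : Measure Ω) [IsProbabilityMeasure P]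
        (p : Ω → ℝ), Measurable p → (∀ ω, α ≤ p ω) → (∀ ω, p ω ≤ β) →
      ∀ A : Ω → Md d → Md d, (∀ ξ : Md d, Measurable (fun ω => A ω ξ)) →
        (∀ ω, Continuous (A ω)) →
        (∀ ω (ξ : Md d), c₀ * ‖ξ‖ ^ p ω - c₀⁻¹ ≤ ⟪A ω ξ, ξ⟫) →
        (∀ ω (ξ : Md d), ‖A ω ξ‖ ^ (p ω / (p ω - 1)) ≤ c₁ * ‖ξ‖ ^ p ω + c₁) →
      -- `S` is a linear subspace of the measurable functions `Ω → M` with finite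
      -- `p(⬝)`-integral and zero mean:
      ∀ S : Set (Ω → Md d), (∀ w ∈ S, Measurable w) →
        (∀ w ∈ S, ∫⁻ ω, ENNReal.ofReal (‖w ω‖ ^ p ω) ∂P < ⊤) →
        ((0 : Ω → Md d) ∈ S) →
        (∀ w₁ ∈ S, ∀ w₂ ∈ S, w₁ + w₂ ∈ S) →
        (∀ (r : ℝ), ∀ w ∈ S, r • w ∈ S) →
        (∀ w ∈ S, ∫ ω, w ω ∂P = 0) →
      ∀ f : Md d → ℝ,
        (∀ ζ : Md d, f ζ = ⨅ w : S, ∫ ω, ‖ζ + (w : Ω → Md d) ω‖ ^ p ω / p ω ∂P) →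
      ∀ fs : Md d → ℝ≥0∞,
        (∀ ζ : Md d, fs ζ = ⨅ (w : Ω → Md d) (_ : Measurable w)
          (_ : ∫⁻ ω, ENNReal.ofReal (‖w ω‖ ^ (p ω / (p ω - 1))) ∂P < ⊤)
          (_ : ∀ v ∈ S, ∫ ω, ⟪w ω, v ω⟫ ∂P = 0)
          (_ : ∫ ω, w ω ∂P = ζ),
          ∫⁻ ω, ENNReal.ofReal (‖w ω‖ ^ (p ω / (p ω - 1)) / (p ω / (p ω - 1))) ∂P) →
      ∀ (ξ : Md d) (vξ : Ω → Md d), vξ ∈ S →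
        (∀ θ ∈ S, ∫ ω, ⟪A ω (ξ + vξ ω), θ ω⟫ ∂P = 0) →
        fs (∫ ω, A ω (ξ + vξ ω) ∂P) ≤ ENNReal.ofReal (c * f ξ + c) :=
  stmt12_general c₀ c₁ α β hc₀ hc₁ hα
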